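/- Let G=(V,E) be a DAG and 𝒫 a path cover of G of size t. Then there exists a path cover 𝒫' of G with |𝒫'| = t whose support (set of distinct edges used by the paths of 𝒫') has fewer than 2|V| edges. -/

import Mathlib

open Finset

section Prelude

variable {V : Type*}

/-- A (directed) path in the graph with edge relation `E`: nonempty, consecutive
vertices joined by edges, and vertices pairwise distinct. -/
def IsPathOn (E : V → V → Prop) (p : List V) : Prop :=
  p ≠ [] ∧ p.Chain' E ∧ p.Nodup

/-- Reachability in the graph with edge relation `E`. -/
def Reaches (E : V → V → Prop) : V → V → Prop := Relation.ReflTransGen E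

/-- The edges of a path, as the list of consecutive pairs of vertices. -/
def pathEdges (p : List V) : List (V × V) := p.zip p.tail

/-- A path cover: a multiset of paths such that every vertex is on some path. -/
def IsPathCover (E : V → V → Prop) (P : Multiset (List V)) : Prop :=
  (∀ p ∈ P, IsPathOn E p) ∧ ∀ v : V, ∃ p ∈ P, v ∈ p

/-- The width of a graph: the minimum size of a path cover. -/
noncomputable def gwidth (E : V → V → Prop) : ℕ :=
  sInf {n | ∃ P : Multiset (List V), IsPathCover E P ∧ Multiset.card P = n}

/-- A DAG: no proper (directed) cycles. -/
def IsDAG (E : V → V → Prop) : Prop := ∀ v, ¬ Relation.TransGen E v v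

/-- The edge relation of a finite edge set. -/
def edgeRel (E : Finset (V × V)) : V → V → Prop := fun a b => (a, b) ∈ E

/-- Multiplicity of an edge with respect to a multiset of paths. -/
def mult [DecidableEq V] (P : Multiset (List V)) (e : V × V) : ℕ :=
  Multiset.countP (fun p => e ∈ pathEdges p) P

/-- A flow network: a finite edge set, source, sink, and lower bounds (demands). -/
structure FlowNet (V : Type*) where
  E : Finset (V × V)
  s : V
  t : V
  d : V × V → ℕ

/-- A flow: supported on edges, satisfying the demands, and flow conservation at
every vertex other than the source and the sink. -/
def IsFlow [Fintype V] (N : FlowNet V) (f : V × V → ℕ) : Prop :=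
  (∀ e, e ∉ N.E → f e = 0) ∧ (∀ e ∈ N.E, N.d e ≤ f e) ∧
  ∀ v : V, v ≠ N.s → v ≠ N.t → (∑ u : V, f (u, v)) = ∑ u : V, f (v, u)

/-- The size of a flow: net outflow at the source. -/
def flowSize [Fintype V] (N : FlowNet V) (f : V × V → ℕ) : ℤ :=
  (∑ u : V, (f (N.s, u) : ℤ)) - ∑ u : V, (f (u, N.s) : ℤ)

/-- An `st`-cut, given by the source side `S` (the sink side is the complement). -/
def IsCut (N : FlowNet V) (S : Set V) : Prop := N.s ∈ S ∧ N.t ∉ S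

/-- A one-way cut: a cut with no edge crossing from `T = Sᶜ` to `S`. -/
def IsOwCut (N : FlowNet V) (S : Set V) : Prop :=
  IsCut N S ∧ ∀ e ∈ N.E, e.1 ∉ S → e.2 ∉ S

open Classical in
/-- The demand of a cut: sum of demands of edges crossing from `S` to `T`. -/
noncomputable def cutDemand (N : FlowNet V) (S : Set V) : ℕ :=
  ∑ e ∈ N.E.filter (fun e => e.1 ∈ S ∧ e.2 ∉ S), N.d e

open Classical in
/-- The net flow across a cut: flow from `S` to `T` minus flow from `T` to `S`. -/
noncomputable def cutFlow (N : FlowNet V) (S : Set V) (f : V × V → ℕ) : ℤ :=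
  (∑ e ∈ N.E.filter (fun e => e.1 ∈ S ∧ e.2 ∉ S), (f e : ℤ))
    - ∑ e ∈ N.E.filter (fun e => e.1 ∉ S ∧ e.2 ∈ S), (f e : ℤ)

/-- The residual graph of a network w.r.t. a flow `f`: reverse edges of all edges,
plus the edges whose flow strictly exceeds the demand. -/
def ResidualEdge (N : FlowNet V) (f : V × V → ℕ) (u v : V) : Prop :=
  (v, u) ∈ N.E ∨ ((u, v) ∈ N.E ∧ N.d (u, v) < f (u, v))

/-- Vertices of the flow reduction: two copies of each vertex, plus source/sink. -/
abbrev FR (V : Type*) := (V ⊕ V) ⊕ Bool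

def vinF (v : V) : FR V := Sum.inl (Sum.inl v)
def voutF (v : V) : FR V := Sum.inl (Sum.inr v)
def fsrc : FR V := Sum.inr false
def fsnk : FR V := Sum.inr true

/-- Demands of the flow reduction: `1` on each edge `(vin v, vout v)`, else `0`. -/
def redD [DecidableEq V] : FR V × FR V → ℕ
  | (Sum.inl (Sum.inl a), Sum.inl (Sum.inr b)) => if a = b then 1 else 0
  | _ => 0

/-- The flow reduction of the DAG with edge set `E`. -/
def redNet [Fintype V] [DecidableEq V] (E : Finset (V × V)) : FlowNet (FR V) where
  E := (univ.image fun v : V => (fsrc, vinF v)) ∪ (univ.image fun v : V => (voutF v, fsnk))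
        ∪ (univ.image fun v : V => (vinF v, voutF v))
        ∪ (E.image fun e => (voutF e.1, vinF e.2))
  s := fsrc
  t := fsnk
  d := redD

/-- The layered cut `L^{≤ l}`: the source together with all split vertices of level `≤ l`. -/
def layerCut (ℓ : FR V → ℤ) (l : ℤ) : Set (FR V) :=
  {x | x = fsrc ∨ ((∃ v : V, x = vinF v ∨ x = voutF v) ∧ ℓ x ≤ l)}

open Classical in
/-- The layered antichain `A^l`. -/
noncomputable def layerAntichain [Fintype V] (ℓ : FR V → ℤ) (l : ℤ) : Finset V :=
  univ.filter (fun v => ℓ (vinF v) ≤ l ∧ l < ℓ (voutF v))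

end Prelude

/-!
Among the covers of size `t`, take one whose support `S` is smallest. If `|S| ≥ 2|V|`, the
bipartite graph joining a left copy of `a` to a right copy of `b` for every `(a, b) ∈ S` has at
least as many edges as vertices, so it contains a cycle. Walking around the cycle, the edges
traversed left-to-right minus those traversed right-to-left give a `±1` function `χ` on `S`
with vanishing in- and out-sums at every vertex. Adding `k χ` to the edge multiplicities of the
cover, with `k` the least multiplicity on an edge where `χ = -1`, yields a nonnegative flow with
the same in- and out-flow everywhere and strictly smaller support. In a DAG such a flow, with the
same path starts, decomposes again into `t` paths that cover the same vertices.
-/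

lemma List.sum_countP_and_eq {α ι : Type*} [Fintype ι] [DecidableEq ι] (l : List α)
    (p : α → Prop) [DecidablePred p] (f : α → ι) :
    ∑ i, l.countP (fun a => p a ∧ f a = i) = l.countP p := by
  induction l with
  | nil => simp
  | cons a l ih =>
    simp only [List.countP_cons, Finset.sum_add_distrib, ih, decide_eq_true_eq]
    by_cases h : p a <;> simp [h]

lemma List.dropLast_perm_tail {α : Type*} {l : List α} (h : l.head? = l.getLast?) :
    l.dropLast.Perm l.tail := by
  match l, h with
  | [], _ => simp
  | [_], _ => simp
  | a :: b :: t, h =>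
    have hlast : (b :: t).getLast (List.cons_ne_nil _ _) = a := by
      simpa [List.getLast?_eq_some_getLast] using h.symm
    calc List.Perm (a :: (b :: t).dropLast) ((b :: t).dropLast ++ [a]) :=
          (List.perm_append_singleton _ _).symm
      _ = b :: t := by rw [← hlast, List.dropLast_append_getLast]

lemma List.countP_add_countP_of_disjoint {α : Type*} (l : List α) {p q : α → Prop}
    [DecidablePred p] [DecidablePred q] (h : ∀ a ∈ l, ¬ (p a ∧ q a)) :
    l.countP p + l.countP q = l.countP (fun a => p a ∨ q a) := by
  induction l with
  | nil => simp
  | cons a l ih =>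
    simp only [List.countP_cons, decide_eq_true_eq]
    have := ih fun b hb => h b (List.mem_cons_of_mem _ hb)
    have ha := h a List.mem_cons_self
    by_cases hp : p a <;> by_cases hq : q a <;> simp_all <;> omega

lemma exists_eq_add_indicator {α : Type*} [DecidableEq α] {m : α → ℕ} {a : α}
    (h : m a ≠ 0) : ∃ m₂ : α → ℕ, m = fun x => m₂ x + if x = a then 1 else 0 := by
  refine ⟨Function.update m a (m a - 1), funext fun x => ?_⟩
  by_cases hx : x = a
  · subst hx
    rw [Function.update_self, if_pos rfl]
    omega
  · simp [hx]

lemma exists_rel_forall_not_rel {α : Type*} [Finite α] {R : α → α → Prop}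
    (hR : ∀ x, ¬ Relation.TransGen R x x) {x y : α} (hxy : R x y) :
    ∃ a b, R a b ∧ ∀ c, ¬ R b c := by
  let S : α → α → Prop := fun a b => Relation.TransGen R b a
  have : IsTrans α S := ⟨fun _ _ _ hab hbc => hbc.trans hab⟩
  have : Std.Irrefl S := ⟨hR⟩
  obtain ⟨b, ⟨a, hab⟩, hmin⟩ :=
    (Finite.wellFounded_of_trans_of_irrefl S).has_min {b | ∃ a, R a b} ⟨y, x, hxy⟩
  exact ⟨a, b, hab, fun c hbc => hmin c ⟨b, hbc⟩ (.single hbc)⟩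

section Paths
variable {V : Type*}

@[simp]
lemma pathEdges_nil : pathEdges ([] : List V) = [] := rfl

@[simp]
lemma pathEdges_singleton (a : V) : pathEdges [a] = [] := rfl

@[simp]
lemma pathEdges_cons_cons (a b : V) (l : List V) :
    pathEdges (a :: b :: l) = (a, b) :: pathEdges (b :: l) := rfl

lemma mem_of_mem_pathEdges {p : List V} {e : V × V} (h : e ∈ pathEdges p) :
    e.1 ∈ p ∧ e.2 ∈ p.tail :=
  List.of_mem_zip h

lemma rel_of_mem_pathEdges {R : V → V → Prop} {p : List V} (hp : p.IsChain R) {e : V × V}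
    (h : e ∈ pathEdges p) : R e.1 e.2 := by
  induction p using List.twoStepInduction with
  | nil => simp at h
  | singleton a => simp at h
  | cons_cons a b l _ ih =>
    rcases List.mem_cons.1 h with rfl | h
    · exact hp.rel
    · exact ih b hp.tail h

lemma pathEdges_concat {p : List V} {a : V} (h : p.getLast? = some a) (b : V) :
    pathEdges (p ++ [b]) = pathEdges p ++ [(a, b)] := by
  induction p using List.twoStepInduction with
  | nil => simp at h
  | singleton x => simp_all
  | cons_cons x y l _ ih =>
    rw [List.getLast?_cons_cons] at h
    simp [← ih y h]

lemma mem_iff_head?_or_mem_pathEdges {p : List V} {v : V} :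
    v ∈ p ↔ p.head? = some v ∨ ∃ u, (u, v) ∈ pathEdges p := by
  induction p using List.twoStepInduction with
  | nil => simp
  | singleton a => simp [eq_comm]
  | cons_cons a b l _ ih =>
    have ih := ih b
    simp only [List.mem_cons, List.head?_cons, Option.some.injEq, pathEdges_cons_cons,
      Prod.mk.injEq] at ih ⊢
    constructor
    · rintro (rfl | h)
      · exact .inl rfl
      · rcases ih.1 h with rfl | ⟨u, hu⟩
        · exact .inr ⟨_, .inl ⟨rfl, rfl⟩⟩
        · exact .inr ⟨u, .inr hu⟩
    · rintro (rfl | ⟨u, ⟨-, rfl⟩ | hu⟩)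
      · exact .inl rfl
      · exact .inr (ih.2 (.inl rfl))
      · exact .inr (ih.2 (.inr ⟨u, hu⟩))

lemma reflTransGen_of_getLast? {R : V → V → Prop} {p : List V} (hp : p.IsChain R) {a : V}
    (h : p.getLast? = some a) {x : V} (hx : x ∈ p) : Relation.ReflTransGen R x a := by
  induction p using List.twoStepInduction generalizing x with
  | nil => simp at hx
  | singleton y =>
    simp_all
    rfl
  | cons_cons y z l _ ih =>
    rw [List.getLast?_cons_cons] at h
    rcases List.mem_cons.1 hx with rfl | hx
    · exact .head hp.rel (ih z hp.tail h List.mem_cons_self)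
    · exact ih z hp.tail h hx

lemma IsPathOn.concat {E : V → V → Prop} {p : List V} (hp : IsPathOn E p) {a b : V}
    (ha : p.getLast? = some a) (hab : E a b) (hb : b ∉ p) : IsPathOn E (p ++ [b]) := by
  refine ⟨by simp, hp.2.1.append (List.isChain_singleton b) ?_, ?_⟩
  · simp_all
  · exact hp.2.2.append (List.nodup_singleton b) (by simpa using hb)

end Paths

section Flows
variable {V : Type*} [Fintype V]

def inflow {M : Type*} [AddCommMonoid M] (f : V × V → M) (v : V) : M := ∑ u, f (u, v)

def outflow {M : Type*} [AddCommMonoid M] (f : V × V → M) (v : V) : M := ∑ u, f (v, u)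

lemma inflow_add {M : Type*} [AddCommMonoid M] (f g : V × V → M) (v : V) :
    inflow (fun e => f e + g e) v = inflow f v + inflow g v :=
  Finset.sum_add_distrib

lemma outflow_add {M : Type*} [AddCommMonoid M] (f g : V × V → M) (v : V) :
    outflow (fun e => f e + g e) v = outflow f v + outflow g v :=
  Finset.sum_add_distrib

lemma inflow_eq_of_natCast_eq {f g : V × V → ℕ} {c : ℤ} {χ : V × V → ℤ}
    (h : ∀ e, (f e : ℤ) = g e + c * χ e) {v : V} (hχ : inflow χ v = 0) :
    inflow f v = inflow g v := by
  have : ((inflow f v : ℕ) : ℤ) = inflow g v := by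
    simp only [inflow, Nat.cast_sum, h, Finset.sum_add_distrib, ← Finset.mul_sum]
    rw [show ∑ u, χ (u, v) = 0 from hχ, mul_zero, add_zero]
  exact_mod_cast this

lemma outflow_eq_of_natCast_eq {f g : V × V → ℕ} {c : ℤ} {χ : V × V → ℤ}
    (h : ∀ e, (f e : ℤ) = g e + c * χ e) {v : V} (hχ : outflow χ v = 0) :
    outflow f v = outflow g v := by
  have : ((outflow f v : ℕ) : ℤ) = outflow g v := by
    simp only [outflow, Nat.cast_sum, h, Finset.sum_add_distrib, ← Finset.mul_sum]
    rw [show ∑ u, χ (v, u) = 0 from hχ, mul_zero, add_zero]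
  exact_mod_cast this

lemma exists_neg_of_outflow_eq_zero {χ : V × V → ℤ} (hχ : χ ≠ 0)
    (hout : ∀ v, outflow χ v = 0) :
    ∃ e, χ e < 0 := by
  by_contra! hnonneg
  obtain ⟨e, he⟩ : ∃ e, χ e ≠ 0 := by simpa [funext_iff] using hχ
  have : 0 < outflow χ e.1 :=
    Finset.sum_pos' (fun u _ => hnonneg _) ⟨e.2, mem_univ _, (hnonneg e).lt_of_ne' he⟩
  exact this.ne' (hout e.1)

variable [DecidableEq V]

lemma inflow_indicator_edge (a b v : V) :
    inflow (fun e => if e = (a, b) then 1 else 0) v = if b = v then 1 else 0 := by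
  simp [inflow, Prod.ext_iff, ite_and, eq_comm]

lemma outflow_indicator_edge (a b v : V) :
    outflow (fun e => if e = (a, b) then 1 else 0) v = if a = v then 1 else 0 := by
  simp [outflow, Prod.ext_iff, ite_and, eq_comm]

end Flows

section PathMultisets
variable {V : Type*} [DecidableEq V]

def startCount (Q : Multiset (List V)) (v : V) : ℕ := Q.countP (fun p => p.head? = some v)

def endCount (Q : Multiset (List V)) (v : V) : ℕ := Q.countP (fun p => p.getLast? = some v)

@[simp]
lemma mult_zero : mult (0 : Multiset (List V)) = 0 := rfl

@[simp]
lemma mult_cons (p : List V) (Q : Multiset (List V)) (e : V × V) :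
    mult (p ::ₘ Q) e = mult Q e + if e ∈ pathEdges p then 1 else 0 := by
  simp [mult, Multiset.countP_cons]

@[simp]
lemma startCount_cons (p : List V) (Q : Multiset (List V)) (v : V) :
    startCount (p ::ₘ Q) v = startCount Q v + if p.head? = some v then 1 else 0 := by
  simp [startCount, Multiset.countP_cons]

@[simp]
lemma endCount_cons (p : List V) (Q : Multiset (List V)) (v : V) :
    endCount (p ::ₘ Q) v = endCount Q v + if p.getLast? = some v then 1 else 0 := by
  simp [endCount, Multiset.countP_cons]

lemma support_mult (Q : Multiset (List V)) :
    Function.support (mult Q) = {e | ∃ p ∈ Q, e ∈ pathEdges p} := by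
  ext e
  simp [mult, Multiset.countP_eq_zero]

lemma IsPathCover.mem_of_mult_ne_zero {E : Finset (V × V)} {Q : Multiset (List V)}
    (hQ : IsPathCover (edgeRel E) Q) {e : V × V} (he : mult Q e ≠ 0) : e ∈ E := by
  obtain ⟨p, hp, hep⟩ := Multiset.countP_pos.1 (Nat.pos_of_ne_zero he)
  exact rel_of_mem_pathEdges (hQ.1 p hp).2.1 (by simpa using hep)

variable [Fintype V]

lemma path_balance {p : List V} (hp : p ≠ []) (hnd : p.Nodup) (v : V) :
    (if p.head? = some v then 1 else 0) + inflow (fun e => if e ∈ pathEdges p then 1 else 0) v =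
      (if p.getLast? = some v then 1 else 0) +
        outflow (fun e => if e ∈ pathEdges p then 1 else 0) v := by
  induction p using List.twoStepInduction with
  | nil => contradiction
  | singleton a => simp [inflow, outflow]
  | cons_cons a b l _ ih =>
    have hab : (a, b) ∉ pathEdges (b :: l) := fun h =>
      (List.nodup_cons.1 hnd).1 (mem_of_mem_pathEdges h).1
    have hind : (fun e => if e ∈ pathEdges (a :: b :: l) then 1 else 0) =
        fun e => (if e = (a, b) then 1 else 0) + if e ∈ pathEdges (b :: l) then 1 else 0 := by
      funext e
      by_cases he : e = (a, b) <;> simp [he, hab]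
    have := ih b (List.cons_ne_nil _ _) hnd.of_cons
    rw [hind, inflow_add, outflow_add, inflow_indicator_edge, outflow_indicator_edge]
    simp only [List.head?_cons, List.getLast?_cons_cons, Option.some.injEq] at this ⊢
    split_ifs at this ⊢ <;> omega

lemma flow_balance {Q : Multiset (List V)} (hQ : ∀ p ∈ Q, p ≠ [] ∧ p.Nodup) (v : V) :
    startCount Q v + inflow (mult Q) v = endCount Q v + outflow (mult Q) v := by
  induction Q using Multiset.induction with
  | empty => simp [startCount, endCount, inflow, outflow]
  | cons p Q ih =>
    have hp := path_balance (hQ p (Multiset.mem_cons_self _ _)).1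
      (hQ p (Multiset.mem_cons_self _ _)).2 v
    have := ih fun q hq => hQ q (Multiset.mem_cons_of_mem hq)
    simp only [startCount_cons, endCount_cons, funext (mult_cons p Q), inflow_add, outflow_add]
    omega

lemma card_eq_sum_startCount {Q : Multiset (List V)} (hQ : ∀ p ∈ Q, p ≠ []) :
    Multiset.card Q = ∑ v, startCount Q v := by
  induction Q using Multiset.induction with
  | empty => simp [startCount]
  | cons p Q ih =>
    obtain ⟨a, l, rfl⟩ := List.exists_cons_of_ne_nil (hQ p (Multiset.mem_cons_self _ _))
    simp [Finset.sum_add_distrib, ← ih fun q hq => hQ q (Multiset.mem_cons_of_mem hq)]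

lemma exists_mem_iff_startCount_add_inflow_pos (Q : Multiset (List V)) (v : V) :
    (∃ p ∈ Q, v ∈ p) ↔ 0 < startCount Q v + inflow (mult Q) v := by
  simp only [Nat.add_pos_iff_pos_or_pos, startCount, inflow, Multiset.countP_pos,
    Finset.sum_pos_iff, mult, Finset.mem_univ, true_and]
  constructor
  · rintro ⟨p, hp, hv⟩
    rcases mem_iff_head?_or_mem_pathEdges.1 hv with h | ⟨u, hu⟩
    · exact .inl ⟨p, hp, h⟩
    · exact .inr ⟨u, p, hp, hu⟩
  · rintro (⟨p, hp, h⟩ | ⟨u, p, hp, hu⟩)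
    · exact ⟨p, hp, mem_iff_head?_or_mem_pathEdges.2 (.inl h)⟩
    · exact ⟨p, hp, mem_iff_head?_or_mem_pathEdges.2 (.inr ⟨u, hu⟩)⟩

end PathMultisets

section Decomposition
variable {V : Type*} [DecidableEq V]

lemma exists_paths_extend_edge {E : Finset (V × V)} (hdag : IsDAG (edgeRel E))
    {Q : Multiset (List V)} (hQ : ∀ p ∈ Q, IsPathOn (edgeRel E) p) {a b : V}
    (hab : (a, b) ∈ E) (ha : endCount Q a ≠ 0) :
    ∃ Q' : Multiset (List V), (∀ p ∈ Q', IsPathOn (edgeRel E) p) ∧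
      (∀ e, mult Q' e = mult Q e + if e = (a, b) then 1 else 0) ∧
      startCount Q' = startCount Q := by
  obtain ⟨p, hpQ, hpa⟩ : ∃ p ∈ Q, p.getLast? = some a := by
    simpa using Multiset.countP_pos.1 (Nat.pos_of_ne_zero ha)
  obtain ⟨R, rfl⟩ := Multiset.exists_cons_of_mem hpQ
  have hp := hQ p (Multiset.mem_cons_self _ _)
  have hbp : b ∉ p := fun hb =>
    hdag b (Relation.TransGen.tail' (reflTransGen_of_getLast? hp.2.1 hpa hb) hab)
  have habp : (a, b) ∉ pathEdges p := fun h =>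
    hbp (List.mem_of_mem_tail (mem_of_mem_pathEdges h).2)
  refine ⟨(p ++ [b]) ::ₘ R, ?_, fun e => ?_, funext fun v => ?_⟩
  · simp only [Multiset.mem_cons]
    rintro q (rfl | hq)
    · exact hp.concat hpa hab hbp
    · exact hQ q (Multiset.mem_cons_of_mem hq)
  · by_cases he : e = (a, b)
    · subst he
      simp [pathEdges_concat hpa, habp]
    · simp [pathEdges_concat hpa, he]
  · simp [List.head?_append_of_ne_nil _ hp.1]

variable [Fintype V]

lemma exists_trivial_paths (E : V → V → Prop) (s : V → ℕ) :
    ∃ Q : Multiset (List V), (∀ p ∈ Q, IsPathOn E p) ∧ mult Q = 0 ∧ startCount Q = s := by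
  refine ⟨(∑ v, Multiset.replicate (s v) v).map (fun v => [v]), ?_, ?_, ?_⟩
  · simp only [Multiset.mem_map]
    rintro _ ⟨v, -, rfl⟩
    exact ⟨List.cons_ne_nil _ _, List.isChain_singleton v, List.nodup_singleton v⟩
  · funext e
    refine Multiset.countP_eq_zero.2 ?_
    simp only [Multiset.mem_map]
    rintro _ ⟨v, -, rfl⟩
    simp
  · funext v
    simp [startCount, Multiset.countP_map, Multiset.filter_eq', Multiset.count_sum',
      Multiset.count_replicate]

theorem exists_paths_of_flow {E : Finset (V × V)} (hdag : IsDAG (edgeRel E)) (s : V → ℕ) :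
    ∀ m : V × V → ℕ, (∀ e, m e ≠ 0 → e ∈ E) →
      (∀ v, outflow m v ≤ s v + inflow m v) →
      ∃ Q : Multiset (List V), (∀ p ∈ Q, IsPathOn (edgeRel E) p) ∧ mult Q = m ∧
        startCount Q = s := by
  intro m
  induction hN : ∑ e, m e using Nat.strong_induction_on generalizing m with
  | _ N ih =>
  intro hmE hbal
  by_cases hm0 : m = 0
  · exact hm0 ▸ exists_trivial_paths _ s
  obtain ⟨e₀, he₀⟩ : ∃ e, m e ≠ 0 := by simpa [funext_iff] using hm0
  obtain ⟨a, b, hab, hb⟩ := exists_rel_forall_not_rel (R := fun x y => m (x, y) ≠ 0)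
    (fun x hx => hdag x (Relation.TransGen.mono (fun _ _ h => hmE _ h) _ _ hx))
    (x := e₀.1) (y := e₀.2) he₀
  have habE : (a, b) ∈ E := hmE _ hab
  have hne : a ≠ b := fun h => hdag a (.single (h ▸ habE))
  -- Peel off an edge `(a, b)` into a sink `b` of the flow, decompose the rest, and append `b`
  -- to a path that ends at `a`.
  obtain ⟨m₂, rfl⟩ := exists_eq_add_indicator hab
  simp only at hmE hb
  simp only [inflow_add, outflow_add, inflow_indicator_edge, outflow_indicator_edge] at hbal
  have hout_b : outflow m₂ b = 0 := Finset.sum_eq_zero fun c _ => by have := hb c; omega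
  obtain ⟨Q, hQ, rfl, hQs⟩ := ih (∑ e, m₂ e)
    (by rw [← hN, Finset.sum_add_distrib, Finset.sum_ite_eq']; simp) m₂ rfl
    (fun e he => hmE e (by omega))
    (fun v => by
      have := hbal v
      rcases eq_or_ne b v with rfl | hbv
      · omega
      · rw [if_neg hbv] at this
        omega)
  obtain ⟨Q', hQ', hQ'm, hQ's⟩ := exists_paths_extend_edge hdag hQ habE (by
    have := flow_balance (fun p hp => ⟨(hQ p hp).1, (hQ p hp).2.2⟩) a
    have := hbal a
    rw [hQs, if_pos rfl, if_neg hne.symm] at *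
    omega)
  exact ⟨Q', hQ', funext hQ'm, hQ's.trans hQs⟩

end Decomposition

namespace SimpleGraph
variable {W : Type*} {G : SimpleGraph W}

lemma IsAcyclic.card_edgeSet_lt [Finite W] [Nonempty W] (hG : G.IsAcyclic) :
    Nat.card G.edgeSet < Nat.card W := by
  have := Fintype.ofFinite W
  obtain ⟨T, hGT, -, hT, hreach⟩ :=
    (⊤ : SimpleGraph W).exists_isAcyclic_reachable_eq_le_of_le_of_isAcyclic le_top hG
  have hTtree : T.IsTree := ⟨(connected_iff _).2 ⟨fun u v => by
    rw [hreach]; exact (connected_top).preconnected u v, inferInstance⟩, hT⟩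
  classical
  rw [Nat.card_eq_fintype_card (α := W), ← hTtree.card_edgeFinset, Nat.card_eq_fintype_card,
    ← edgeFinset_card]
  exact Nat.lt_succ_of_le (Finset.card_mono (edgeFinset_mono hGT))

namespace Walk
variable [DecidableEq W] {u v : W}

def dartCount (c : G.Walk u v) (x y : W) : ℕ := c.darts.countP (fun d => d.toProd = (x, y))

lemma adj_of_dartCount_ne_zero {c : G.Walk u v} {x y : W} (h : c.dartCount x y ≠ 0) :
    G.Adj x y := by
  obtain ⟨d, -, hd⟩ := List.countP_pos_iff.1 (Nat.pos_of_ne_zero h)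
  simp only [decide_eq_true_eq] at hd
  simpa [hd] using d.adj

lemma dartCount_add_dartCount_le_one {c : G.Walk u v} (hc : c.IsTrail) (x y : W) :
    c.dartCount x y + c.dartCount y x ≤ 1 := by
  rw [dartCount, dartCount, List.countP_add_countP_of_disjoint]
  · calc _ ≤ c.darts.countP (fun d => d.edge = s(x, y)) := by
          refine List.countP_mono_left fun d _ hd => ?_
          simp only [decide_eq_true_eq, Dart.edge] at hd ⊢
          rcases hd with hd | hd <;> simp [hd, Sym2.eq_swap]
      _ = c.edges.count s(x, y) := by simp [edges, List.count, List.countP_map]; rfl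
      _ ≤ 1 := hc.count_edges_le_one _
  · rintro d - ⟨h1, h2⟩
    have hadj : G.Adj x y := by simpa [h1] using d.adj
    exact hadj.ne (Prod.ext_iff.1 (h1.symm.trans h2)).1

lemma countP_fst_darts_eq (c : G.Walk u u) (x : W) :
    c.darts.countP (fun d => d.fst = x) = c.darts.countP (fun d => d.snd = x) := by
  have hc : c.support.head? = c.support.getLast? := by
    rw [List.head?_eq_some_head c.support_ne_nil, head_support,
      List.getLast?_eq_some_getLast c.support_ne_nil, getLast_support]
  have h := (List.dropLast_perm_tail hc).countP_eq (· = x)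
  rwa [← map_fst_darts, ← map_snd_darts, List.countP_map, List.countP_map] at h

lemma sum_dartCount_eq [Fintype W] (c : G.Walk u u) (x : W) :
    ∑ y, c.dartCount x y = ∑ y, c.dartCount y x := by
  have hout : ∑ y, c.dartCount x y = c.darts.countP (fun d => d.fst = x) := by
    simp only [dartCount, Prod.ext_iff]
    exact List.sum_countP_and_eq _ _ _
  have hin : ∑ y, c.dartCount y x = c.darts.countP (fun d => d.snd = x) := by
    simp only [dartCount, Prod.ext_iff, and_comm (a := Prod.fst _ = _)]
    exact List.sum_countP_and_eq _ _ _
  rw [hout, hin, countP_fst_darts_eq]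

end Walk
end SimpleGraph

section Circulation
variable {V : Type*}

open SimpleGraph

def splitGraph (S : Set (V × V)) : SimpleGraph (V ⊕ V) :=
  fromRel fun x y => ∃ e ∈ S, x = .inl e.1 ∧ y = .inr e.2

variable {S : Set (V × V)}

@[simp]
lemma splitGraph_adj_inl_inr {a b : V} : (splitGraph S).Adj (.inl a) (.inr b) ↔ (a, b) ∈ S := by
  simp [splitGraph, fromRel_adj]

@[simp]
lemma not_splitGraph_adj_inl_inl (a a' : V) : ¬ (splitGraph S).Adj (.inl a) (.inl a') := by
  simp [splitGraph, fromRel_adj]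

@[simp]
lemma not_splitGraph_adj_inr_inr (b b' : V) : ¬ (splitGraph S).Adj (.inr b) (.inr b') := by
  simp [splitGraph, fromRel_adj]

lemma exists_isCycle_splitGraph [Fintype V] [Nonempty V] (hS : 2 * Fintype.card V ≤ S.ncard) :
    ∃ (x : V ⊕ V) (c : (splitGraph S).Walk x x), c.IsCycle := by
  by_contra! hacyc
  have hlt := IsAcyclic.card_edgeSet_lt (G := splitGraph S) fun v c => hacyc v c
  have hle : S.ncard ≤ Nat.card (splitGraph S).edgeSet := by
    rw [Nat.card_coe_set_eq]
    refine Set.ncard_le_ncard_of_injOn (fun e => s(.inl e.1, .inr e.2))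
      (fun e he => splitGraph_adj_inl_inr.2 he) ?_ (Set.toFinite _)
    intro e _ e' _ h
    simpa [Prod.ext_iff] using h
  rw [Nat.card_sum, Nat.card_eq_fintype_card (α := V)] at hlt
  omega

lemma exists_circulation_of_isCycle [Fintype V] [DecidableEq V] {x : V ⊕ V}
    {c : (splitGraph S).Walk x x} (hc : c.IsCycle) :
    ∃ χ : V × V → ℤ, χ ≠ 0 ∧ Function.support χ ⊆ S ∧ (∀ e, |χ e| ≤ 1) ∧
      (∀ v, inflow χ v = 0) ∧ ∀ v, outflow χ v = 0 := by
  have hzero : ∀ x y, ¬ (splitGraph S).Adj x y → c.dartCount x y = 0 := fun x y h =>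
    by_contra fun h' => h (Walk.adj_of_dartCount_ne_zero h')
  have hbound := c.dartCount_add_dartCount_le_one hc.isTrail
  refine ⟨fun e => (c.dartCount (.inl e.1) (.inr e.2) : ℤ) - c.dartCount (.inr e.2) (.inl e.1),
    ?_, ?_, fun e => ?_, fun v => ?_, fun v => ?_⟩
  · obtain ⟨d, hd⟩ := List.exists_mem_of_ne_nil _ (Walk.darts_eq_nil.not.2 hc.not_nil)
    have hpos : c.dartCount d.fst d.snd ≠ 0 :=
      (List.countP_pos_iff.2 ⟨d, hd, by simp⟩).ne'
    intro h
    have hd_adj := d.adj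
    rcases hfst : d.fst with a | b <;> rcases hsnd : d.snd with a' | b' <;>
      rw [hfst, hsnd] at hpos hd_adj
    · exact not_splitGraph_adj_inl_inl _ _ hd_adj
    · have := congrFun h (a, b')
      have := hbound (.inl a) (.inr b')
      simp only [Pi.zero_apply] at *
      omega
    · have := congrFun h (a', b)
      have := hbound (.inl a') (.inr b)
      simp only [Pi.zero_apply] at *
      omega
    · exact not_splitGraph_adj_inr_inr _ _ hd_adj
  · intro e he
    rw [← splitGraph_adj_inl_inr]
    by_contra hn
    simp [hzero _ _ hn, hzero _ _ (fun h => hn h.symm)] at he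
  · have := hbound (.inl e.1) (.inr e.2)
    dsimp only
    exact abs_le.2 ⟨by omega, by omega⟩
  · have h := c.sum_dartCount_eq (.inr v)
    simp only [Fintype.sum_sum_type, hzero _ _ (not_splitGraph_adj_inr_inr _ _),
      Finset.sum_const_zero, add_zero] at h
    simp only [inflow, Finset.sum_sub_distrib, ← Nat.cast_sum, h, sub_self]
  · have h := c.sum_dartCount_eq (.inl v)
    simp only [Fintype.sum_sum_type, hzero _ _ (not_splitGraph_adj_inl_inl _ _),
      Finset.sum_const_zero, zero_add] at h
    simp only [outflow, Finset.sum_sub_distrib, ← Nat.cast_sum, h, sub_self]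

end Circulation

section Rerouting
variable {V : Type*} [Fintype V] [DecidableEq V] {E : Finset (V × V)} {Q : Multiset (List V)}

theorem IsPathCover.exists_of_flow_eq (hdag : IsDAG (edgeRel E)) (hQ : IsPathCover (edgeRel E) Q)
    (m : V × V → ℕ) (hmE : ∀ e, m e ≠ 0 → e ∈ E) (hin : inflow m = inflow (mult Q))
    (hout : outflow m = outflow (mult Q)) :
    ∃ Q', IsPathCover (edgeRel E) Q' ∧ Multiset.card Q' = Multiset.card Q ∧ mult Q' = m := by
  have hQne : ∀ p ∈ Q, p ≠ [] ∧ p.Nodup := fun p hp => ⟨(hQ.1 p hp).1, (hQ.1 p hp).2.2⟩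
  obtain ⟨Q', hQ', rfl, hs⟩ := exists_paths_of_flow hdag (startCount Q) m hmE fun v => by
    have := flow_balance hQne v
    rw [hin, hout]
    omega
  refine ⟨Q', ⟨hQ', fun v => ?_⟩, ?_, rfl⟩
  · rw [exists_mem_iff_startCount_add_inflow_pos, hs, hin,
      ← exists_mem_iff_startCount_add_inflow_pos]
    exact hQ.2 v
  · rw [card_eq_sum_startCount fun p hp => (hQ' p hp).1, hs,
      card_eq_sum_startCount fun p hp => (hQne p hp).1]

theorem IsPathCover.exists_support_ssubset (hdag : IsDAG (edgeRel E))
    (hQ : IsPathCover (edgeRel E) Q) {χ : V × V → ℤ} (hχ : χ ≠ 0)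
    (hχQ : Function.support χ ⊆ Function.support (mult Q)) (hχ1 : ∀ e, |χ e| ≤ 1)
    (hin : ∀ v, inflow χ v = 0) (hout : ∀ v, outflow χ v = 0) :
    ∃ Q', IsPathCover (edgeRel E) Q' ∧ Multiset.card Q' = Multiset.card Q ∧
      Function.support (mult Q') ⊂ Function.support (mult Q) := by
  obtain ⟨e₁, he₁⟩ := exists_neg_of_outflow_eq_zero hχ hout
  obtain ⟨e₀, he₀, hmin⟩ :=
    Finset.exists_min_image (univ.filter (χ · < 0)) (mult Q) ⟨e₁, by simpa using he₁⟩
  simp only [Finset.mem_filter, Finset.mem_univ, true_and] at he₀ hmin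
  have hχneg : ∀ e, χ e < 0 → χ e = -1 := fun e he => by have := abs_le.1 (hχ1 e); omega
  set k := mult Q e₀
  let m' : V × V → ℕ := fun e => ((mult Q e : ℤ) + k * χ e).toNat
  have hm' : ∀ e, (m' e : ℤ) = mult Q e + k * χ e := fun e => by
    refine Int.toNat_of_nonneg ?_
    rcases lt_or_ge (χ e) 0 with he | he
    · have := hmin e he
      rw [hχneg e he]
      omega
    · positivity
  have hχ0 : ∀ e, mult Q e = 0 → χ e = 0 := fun e he => by
    by_contra hχe
    exact hχQ hχe he
  have he₀Q : mult Q e₀ ≠ 0 := hχQ he₀.ne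
  have hm'e₀ : m' e₀ = 0 := by
    have := hm' e₀
    rw [hχneg e₀ he₀] at this
    omega
  obtain ⟨Q', hQ', hcard, hQ'm⟩ := hQ.exists_of_flow_eq hdag m'
    (fun e he => hQ.mem_of_mult_ne_zero fun h => he (by simp [m', h, hχ0 e h]))
    (funext fun v => inflow_eq_of_natCast_eq hm' (hin v))
    (funext fun v => outflow_eq_of_natCast_eq hm' (hout v))
  rw [← hQ'm] at hm'e₀
  refine ⟨Q', hQ', hcard, fun e he => ?_, fun h => h he₀Q hm'e₀⟩
  rw [Function.mem_support, hQ'm] at he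
  by_contra h
  exact he (by simp [m', not_not.1 h, hχ0 e (not_not.1 h)])

end Rerouting

theorem IsPathCover.exists_ncard_support_lt {V : Type*} [Fintype V] [DecidableEq V] [Nonempty V]
    {E : Finset (V × V)} (hdag : IsDAG (edgeRel E)) {Q : Multiset (List V)}
    (hQ : IsPathCover (edgeRel E) Q) :
    ∃ Q', IsPathCover (edgeRel E) Q' ∧ Multiset.card Q' = Multiset.card Q ∧
      (Function.support (mult Q')).ncard < 2 * Fintype.card V := by
  induction hN : (Function.support (mult Q)).ncard using Nat.strong_induction_on
    generalizing Q with
  | _ N ih =>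
  by_cases hsmall : N < 2 * Fintype.card V
  · exact ⟨Q, hQ, rfl, hN ▸ hsmall⟩
  obtain ⟨x, c, hc⟩ := exists_isCycle_splitGraph (hN ▸ not_lt.1 hsmall)
  obtain ⟨χ, hχ, hχQ, hχ1, hin, hout⟩ := exists_circulation_of_isCycle hc
  obtain ⟨Q', hQ', hcard', hss⟩ := hQ.exists_support_ssubset hdag hχ hχQ hχ1 hin hout
  obtain ⟨Q'', hQ'', hcard'', hlt⟩ := ih _ (hN ▸ Set.ncard_lt_ncard hss) hQ' rfl
  exact ⟨Q'', hQ'', hcard''.trans hcard', hlt⟩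

/-- every path cover of size `t` of a DAG can be transformed into one of
the same size whose support has fewer than `2|V|` distinct edges. -/
theorem stmt_12 {V : Type*} [Fintype V] [DecidableEq V] [Nonempty V]
    (E : Finset (V × V)) (hdag : IsDAG (edgeRel E)) (P : Multiset (List V)) (t : ℕ)
    (hP : IsPathCover (edgeRel E) P) (hcard : Multiset.card P = t) :
    ∃ P' : Multiset (List V), IsPathCover (edgeRel E) P' ∧ Multiset.card P' = t ∧
      Set.ncard {e : V × V | ∃ p ∈ P', e ∈ pathEdges p} < 2 * Fintype.card V := by
  obtain ⟨P', hP', hcard', hlt⟩ := hP.exists_ncard_support_lt hdag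
  exact ⟨P', hP', hcard'.trans hcard, support_mult P' ▸ hlt⟩
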